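/- Suppose additionally that u + v > 0. Then there exists exactly one vector x ∈ ℝ^{S_m} satisfying Q x = 0 (where x is a column vector indexed by S_m) and the normalization x_{(1,0)} + x_{(1,1)} = 1. (The kernel of Q is one-dimensional, and holds a unique representative with the stated normalization.) -/

import Mathlib

open Finset

/-- The state space `S_m = {(n,r) : 1 ≤ n ≤ m, 0 ≤ r ≤ n}`, realised as a subtype of
`Fin (m+1) × Fin (m+1)` (first coordinate `n`, second coordinate `r`). -/
abbrev SmIdx (m : ℕ) := {p : Fin (m + 1) × Fin (m + 1) // 1 ≤ (p.1 : ℕ) ∧ (p.2 : ℕ) ≤ (p.1 : ℕ)}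

/-- The entry of the matrix `Q` in row `(n,r)` and column `(n',r')`:
`Q_{(n,r),(n,r-1)} = (n-r+1)v`, `Q_{(n,r),(n,r+1)} = (r+1)u`,
`Q_{(n,r),(n-1,r)} = (n-1-r)n/θ`, `Q_{(n,r),(n-1,r-1)} = (r-1)n/θ`,
`Q_{(n,r),(n,r)} = -n(n-1)/θ - (n-r)v - ru`, and all other entries zero. -/
noncomputable def QEnt (θ u v : ℝ) (n r n' r' : ℕ) : ℝ :=
  if n' = n ∧ r' + 1 = r then ((n : ℝ) - (r : ℝ) + 1) * v
  else if n' = n ∧ r' = r + 1 then ((r : ℝ) + 1) * u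
  else if n' + 1 = n ∧ r' = r then ((n : ℝ) - 1 - (r : ℝ)) * (n : ℝ) / θ
  else if n' + 1 = n ∧ r' + 1 = r then ((r : ℝ) - 1) * (n : ℝ) / θ
  else if n' = n ∧ r' = r then
    -((n : ℝ) * ((n : ℝ) - 1) / θ) - ((n : ℝ) - (r : ℝ)) * v - (r : ℝ) * u
  else 0

/-- The matrix `Q`, rows and columns indexed by `S_m`. -/
noncomputable def coalQ (m : ℕ) (θ u v : ℝ) : Matrix (SmIdx m) (SmIdx m) ℝ :=
  fun p q => QEnt θ u v (p.1.1 : ℕ) (p.1.2 : ℕ) (q.1.1 : ℕ) (q.1.2 : ℕ)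

/-- The state `(1,0) ∈ S_m`. -/
def st10 (m : ℕ) (hm : 1 ≤ m) : SmIdx m :=
  ⟨(⟨1, Nat.lt_succ_of_le hm⟩, ⟨0, Nat.succ_pos m⟩), le_refl 1, Nat.zero_le 1⟩

/-- The state `(1,1) ∈ S_m`. -/
def st11 (m : ℕ) (hm : 1 ≤ m) : SmIdx m :=
  ⟨(⟨1, Nat.lt_succ_of_le hm⟩, ⟨1, Nat.lt_succ_of_le hm⟩), le_refl 1, le_refl 1⟩

/-!
Rows of `Q` at level `n` only involve levels `n` and `n - 1`, and the diagonal block at level `n`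
is the transposed generator of the mutation chain on `{0, …, n}` minus `n(n-1)/θ`. Columns of a
generator sum to zero, so for `n ≥ 2` the block is strictly column diagonally dominant: summing
`|x_{n,r}|` against the equations shows that a kernel vector vanishing on level `n - 1` vanishes
on level `n`. On level `1` the equations reduce to `v x_{1,0} = u x_{1,1}`, which together with
`x_{1,0} + x_{1,1} = 0` forces `x_{1,0} = x_{1,1} = 0` when `u + v > 0`. Hence `Q` with its
redundant row `(1,0)` replaced by the normalization is injective, so invertible, and the vector
sought is the preimage of the indicator of `(1,0)`.
-/

theorem eq_zero_of_balance_with_killing {n : ℕ} {c u v : ℝ} (hc : 0 < c) (hu : 0 ≤ u)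
    (hv : 0 ≤ v) (y : ℤ → ℝ) (hlo : y (-1) = 0) (hhi : y (n + 1) = 0)
    (h : ∀ r : ℕ, r ≤ n → (c + (n - r) * v + r * u) * y r =
      (n - r + 1) * v * y (r - 1) + (r + 1) * u * y (r + 1)) :
    ∀ r : ℕ, r ≤ n → y r = 0 := by
  set z : ℤ → ℝ := fun r => |y r|
  have hz : ∀ r ∈ range (n + 1), (c + (n - r) * v + r * u) * z r ≤
      (n - r + 1) * v * z (r - 1) + (r + 1) * u * z (r + 1) := by
    intro r hmem
    have hr : r ≤ n := Nat.lt_succ_iff.mp (mem_range.mp hmem)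
    have hnr : (r : ℝ) ≤ n := by exact_mod_cast hr
    have hD : 0 ≤ c + (n - r) * v + r * u := by
      have : 0 ≤ (n - r : ℝ) := by linarith
      positivity
    calc (c + (n - r) * v + r * u) * z r = |(c + (n - r) * v + r * u) * y r| := by
          rw [abs_mul, abs_of_nonneg hD]
      _ ≤ |(n - r + 1) * v * y (r - 1)| + |(r + 1) * u * y (r + 1)| := by
          rw [h r hr]; exact abs_add_le _ _
      _ = _ := by
          have : 0 ≤ (n - r + 1 : ℝ) := by linarith
          simp only [z, abs_mul, abs_of_nonneg this, abs_of_nonneg hv, abs_of_nonneg hu,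
            abs_of_nonneg (by positivity : (0 : ℝ) ≤ r + 1)]
  -- Reindexed, the inflow sums are the outflow sums, so only `c * ∑ |y r|` survives.
  have hdown : ∑ r ∈ range (n + 1), (n - r + 1 : ℝ) * v * z (r - 1) =
      ∑ r ∈ range (n + 1), (n - r : ℝ) * v * z r := by
    rw [sum_range_succ', sum_range_succ]
    simp [z, hlo, sub_add_eq_sub_sub]
  have hup : ∑ r ∈ range (n + 1), (r + 1 : ℝ) * u * z (r + 1) =
      ∑ r ∈ range (n + 1), (r : ℝ) * u * z r := by
    rw [sum_range_succ, sum_range_succ' (fun r : ℕ => (r : ℝ) * u * z r)]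
    simp [z, hhi]
  have hsum : c * ∑ r ∈ range (n + 1), z r ≤ 0 := by
    have := sum_le_sum hz
    rw [sum_add_distrib, hdown, hup] at this
    simp only [add_mul, sum_add_distrib, ← mul_sum] at this
    linarith
  have hzero : ∀ r ∈ range (n + 1), z r = 0 :=
    (sum_eq_zero_iff_of_nonneg fun r _ => abs_nonneg _).mp
      (le_antisymm (nonpos_of_mul_nonpos_right hsum hc) (sum_nonneg fun r _ => abs_nonneg _))
  intro r hr
  exact abs_eq_zero.mp (hzero r (mem_range.mpr (Nat.lt_succ_of_le hr)))

namespace SmIdx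

variable {m : ℕ}

/-- Integer coordinates make the neighbours `(n, r - 1)`, `(n - 1, r)`, ... of a state genuine
out-of-range points, where the extension is `0`. -/
def extendByZero (x : SmIdx m → ℝ) (n r : ℤ) : ℝ :=
  if h : 1 ≤ n ∧ n ≤ m ∧ 0 ≤ r ∧ r ≤ n then
    x ⟨(⟨n.toNat, by omega⟩, ⟨r.toNat, by omega⟩), by dsimp only; omega⟩
  else 0

theorem extendByZero_coe (x : SmIdx m → ℝ) (p : SmIdx m) :
    extendByZero x p.1.1 p.1.2 = x p := by
  have := p.1.1.isLt
  rw [extendByZero, dif_pos (by omega)]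
  rfl

theorem extendByZero_eq_zero (x : SmIdx m → ℝ) {n r : ℤ}
    (h : ¬(1 ≤ n ∧ n ≤ m ∧ 0 ≤ r ∧ r ≤ n)) : extendByZero x n r = 0 :=
  dif_neg h

theorem sum_ite_mul_eq_extendByZero (x : SmIdx m → ℝ) (c : ℝ) (n r : ℤ) :
    ∑ q : SmIdx m, (if (q.1.1 : ℤ) = n ∧ (q.1.2 : ℤ) = r then c else 0) * x q =
      c * extendByZero x n r := by
  by_cases h : 1 ≤ n ∧ n ≤ m ∧ 0 ≤ r ∧ r ≤ n
  · obtain ⟨q₀, hn, hr⟩ : ∃ q₀ : SmIdx m, (q₀.1.1 : ℤ) = n ∧ (q₀.1.2 : ℤ) = r :=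
      ⟨⟨(⟨n.toNat, by omega⟩, ⟨r.toNat, by omega⟩), by dsimp only; omega⟩, by dsimp only; omega⟩
    have hq : ∀ q : SmIdx m, ((q.1.1 : ℤ) = n ∧ (q.1.2 : ℤ) = r) ↔ q = q₀ := by
      intro q
      simp [← hn, ← hr, Subtype.ext_iff, Prod.ext_iff, Fin.ext_iff]
    simp_rw [hq, ite_mul, zero_mul, sum_ite_eq', mem_univ, if_true]
    rw [← hn, ← hr, extendByZero_coe]
  · rw [extendByZero_eq_zero x h, mul_zero]
    refine sum_eq_zero fun q _ => ?_
    have := q.1.1.isLt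
    have := q.2
    rw [if_neg (by omega), zero_mul]

end SmIdx

open SmIdx Matrix

theorem QEnt_eq_sum_ite (θ u v : ℝ) (n r a b : ℕ) : QEnt θ u v n r a b =
    (if (a : ℤ) = n ∧ (b : ℤ) = r - 1 then (n - r + 1) * v else 0)
      + (if (a : ℤ) = n ∧ (b : ℤ) = r + 1 then (r + 1) * u else 0)
      + (if (a : ℤ) = n - 1 ∧ (b : ℤ) = r then (n - 1 - r) * n / θ else 0)
      + (if (a : ℤ) = n - 1 ∧ (b : ℤ) = r - 1 then (r - 1) * n / θ else 0)
      - (if (a : ℤ) = n ∧ (b : ℤ) = r then n * (n - 1) / θ + (n - r) * v + r * u else 0) := by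
  have h₁ : (a : ℤ) = n ∧ (b : ℤ) = r - 1 ↔ a = n ∧ b + 1 = r := by omega
  have h₂ : (a : ℤ) = n ∧ (b : ℤ) = r + 1 ↔ a = n ∧ b = r + 1 := by omega
  have h₃ : (a : ℤ) = n - 1 ∧ (b : ℤ) = r ↔ a + 1 = n ∧ b = r := by omega
  have h₄ : (a : ℤ) = n - 1 ∧ (b : ℤ) = r - 1 ↔ a + 1 = n ∧ b + 1 = r := by omega
  have h₅ : (a : ℤ) = n ∧ (b : ℤ) = r ↔ a = n ∧ b = r := by omega
  simp only [QEnt, h₁, h₂, h₃, h₄, h₅]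
  split_ifs <;> first | ring1 | omega

theorem coalQ_mulVec_apply {m : ℕ} (θ u v : ℝ) (x : SmIdx m → ℝ) (p : SmIdx m) {n r : ℕ}
    (hn : (p.1.1 : ℕ) = n) (hr : (p.1.2 : ℕ) = r) :
    (coalQ m θ u v *ᵥ x) p =
      (n - r + 1) * v * extendByZero x n (r - 1) + (r + 1) * u * extendByZero x n (r + 1)
        + (n - 1 - r) * n / θ * extendByZero x (n - 1) r
        + (r - 1) * n / θ * extendByZero x (n - 1) (r - 1)
        - (n * (n - 1) / θ + (n - r) * v + r * u) * x p := by
  simp only [Matrix.mulVec, dotProduct, coalQ, QEnt_eq_sum_ite, add_mul, sub_mul, sum_add_distrib,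
    sum_sub_distrib, sum_ite_mul_eq_extendByZero]
  rw [← extendByZero_coe x p, hn, hr]

theorem coalQ_mulVec_st10 {m : ℕ} (hm : 1 ≤ m) (θ u v : ℝ) (x : SmIdx m → ℝ) :
    (coalQ m θ u v *ᵥ x) (st10 m hm) = u * x (st11 m hm) - v * x (st10 m hm) := by
  have h₁ : extendByZero x 1 1 = x (st11 m hm) := extendByZero_coe x (st11 m hm)
  rw [coalQ_mulVec_apply θ u v x _ (n := 1) (r := 0) rfl rfl]
  simp [extendByZero_eq_zero, h₁]

theorem coalQ_mulVec_st11 {m : ℕ} (hm : 1 ≤ m) (θ u v : ℝ) (x : SmIdx m → ℝ) :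
    (coalQ m θ u v *ᵥ x) (st11 m hm) = v * x (st10 m hm) - u * x (st11 m hm) := by
  have h₀ : extendByZero x 1 0 = x (st10 m hm) := extendByZero_coe x (st10 m hm)
  rw [coalQ_mulVec_apply θ u v x _ (n := 1) (r := 1) rfl rfl]
  simp [extendByZero_eq_zero, h₀]

theorem coalQ_row_balance {m : ℕ} (θ u v : ℝ) (x : SmIdx m → ℝ) (p : SmIdx m) {n r : ℕ}
    (hn : (p.1.1 : ℕ) = n) (hr : (p.1.2 : ℕ) = r) (hrow : (coalQ m θ u v *ᵥ x) p = 0)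
    (hprev : ∀ s : ℤ, extendByZero x (n - 1) s = 0) :
    (n * (n - 1) / θ + (n - r) * v + r * u) * extendByZero x n r =
      (n - r + 1) * v * extendByZero x n (r - 1) + (r + 1) * u * extendByZero x n (r + 1) := by
  rw [coalQ_mulVec_apply θ u v x p hn hr, hprev, hprev, ← extendByZero_coe x p, hn, hr] at hrow
  linear_combination -hrow

theorem extendByZero_succ_eq_zero {m : ℕ} {θ u v : ℝ} (hθ : 0 < θ) (hu : 0 ≤ u) (hv : 0 ≤ v)
    (x : SmIdx m → ℝ) {n : ℕ} (hn : 1 ≤ n)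
    (hrows : ∀ p : SmIdx m, (p.1.1 : ℕ) = n + 1 → (coalQ m θ u v *ᵥ x) p = 0)
    (hprev : ∀ s : ℤ, extendByZero x n s = 0) (r : ℤ) :
    extendByZero x (n + 1 : ℕ) r = 0 := by
  by_cases hr : n + 1 ≤ m ∧ 0 ≤ r ∧ r ≤ n + 1
  swap
  · exact extendByZero_eq_zero x (by omega)
  lift r to ℕ using hr.2.1
  refine eq_zero_of_balance_with_killing (n := n + 1) (c := (n + 1 : ℕ) * n / θ)
    (by positivity) hu hv _ (extendByZero_eq_zero x (by omega))
    (extendByZero_eq_zero x (by omega)) (fun s hs => ?_) r (by omega)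
  have := coalQ_row_balance θ u v x ⟨(⟨n + 1, by omega⟩, ⟨s, by omega⟩), Nat.le_add_left 1 n, hs⟩
    rfl rfl (hrows _ rfl) (by simpa using hprev)
  push_cast at this ⊢
  linear_combination this

theorem eq_zero_of_coalQ_mulVec_eq_zero {m : ℕ} {θ u v : ℝ} (hθ : 0 < θ) (hu : 0 ≤ u)
    (hv : 0 ≤ v) (x : SmIdx m → ℝ)
    (hrows : ∀ p : SmIdx m, 2 ≤ (p.1.1 : ℕ) → (coalQ m θ u v *ᵥ x) p = 0)
    (hlevel₁ : ∀ r : ℤ, extendByZero x 1 r = 0) : x = 0 := by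
  have hlevel : ∀ n : ℕ, 1 ≤ n → ∀ r : ℤ, extendByZero x n r = 0 := by
    intro n hn
    induction n, hn using Nat.le_induction with
    | base => exact_mod_cast hlevel₁
    | succ n hn ih =>
      exact extendByZero_succ_eq_zero hθ hu hv x hn (fun p hp => hrows p (by omega)) ih
  ext p
  rw [← extendByZero_coe x p]
  exact hlevel _ p.2.1 _

theorem extendByZero_one_eq_zero {m : ℕ} (hm : 1 ≤ m) {x : SmIdx m → ℝ}
    (h₀ : x (st10 m hm) = 0) (h₁ : x (st11 m hm) = 0) (r : ℤ) : extendByZero x 1 r = 0 := by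
  obtain rfl | rfl | hr : r = 0 ∨ r = 1 ∨ ¬(0 ≤ r ∧ r ≤ 1) := by omega
  · exact (extendByZero_coe x (st10 m hm)).trans h₀
  · exact (extendByZero_coe x (st11 m hm)).trans h₁
  · exact extendByZero_eq_zero x (by omega)

/-- Row `(1,0)` of `Q` is minus row `(1,1)`, so trading it for the normalization loses no
equation. -/
noncomputable def normalizedQ (m : ℕ) (hm : 1 ≤ m) (θ u v : ℝ) :
    Matrix (SmIdx m) (SmIdx m) ℝ :=
  (coalQ m θ u v).updateRow (st10 m hm) (Pi.single (st10 m hm) 1 + Pi.single (st11 m hm) 1)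

theorem normalizedQ_mulVec {m : ℕ} (hm : 1 ≤ m) (θ u v : ℝ) (x : SmIdx m → ℝ) :
    normalizedQ m hm θ u v *ᵥ x =
      Function.update (coalQ m θ u v *ᵥ x) (st10 m hm) (x (st10 m hm) + x (st11 m hm)) := by
  rw [normalizedQ, updateRow_mulVec, add_dotProduct, single_dotProduct, single_dotProduct,
    one_mul, one_mul]

theorem st11_ne_st10 {m : ℕ} (hm : 1 ≤ m) : st11 m hm ≠ st10 m hm := by
  simp [st10, st11, Subtype.ext_iff, Prod.ext_iff]

theorem normalizedQ_mulVec_eq_single_iff {m : ℕ} (hm : 1 ≤ m) (θ u v : ℝ) (x : SmIdx m → ℝ) :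
    normalizedQ m hm θ u v *ᵥ x = Pi.single (st10 m hm) 1 ↔
      coalQ m θ u v *ᵥ x = 0 ∧ x (st10 m hm) + x (st11 m hm) = 1 := by
  rw [normalizedQ_mulVec, Function.update_eq_iff, Pi.single_eq_same, and_comm]
  refine and_congr_left fun _ => ⟨fun h => funext fun p => ?_, fun h p hp => by simp [h, hp]⟩
  by_cases hp : p = st10 m hm
  · have h₁ := h _ (st11_ne_st10 hm)
    rw [coalQ_mulVec_st11, Pi.single_eq_of_ne (st11_ne_st10 hm)] at h₁
    rw [hp, coalQ_mulVec_st10, Pi.zero_apply]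
    linarith
  · simpa [hp] using h p hp

theorem normalizedQ_mulVec_injective {m : ℕ} (hm : 1 ≤ m) {θ u v : ℝ} (hθ : 0 < θ)
    (hu : 0 ≤ u) (hv : 0 ≤ v) (huv : 0 < u + v) :
    Function.Injective (normalizedQ m hm θ u v).mulVec := by
  refine LinearMap.ker_eq_bot.mp
    (ker_mulVecLin_eq_bot_iff (M := normalizedQ m hm θ u v).mpr fun x hx => ?_)
  rw [normalizedQ_mulVec, Function.update_eq_iff] at hx
  obtain ⟨hsum, hrows⟩ : x (st10 m hm) + x (st11 m hm) = 0 ∧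
      ∀ p ≠ st10 m hm, (coalQ m θ u v *ᵥ x) p = 0 := hx
  have hrow₁ := hrows _ (st11_ne_st10 hm)
  rw [coalQ_mulVec_st11] at hrow₁
  have h₀ : x (st10 m hm) = 0 := by
    have : (u + v) * x (st10 m hm) = 0 := by linear_combination hrow₁ + u * hsum
    exact (mul_eq_zero.mp this).resolve_left huv.ne'
  have h₁ : x (st11 m hm) = 0 := by simpa [h₀] using hsum
  refine eq_zero_of_coalQ_mulVec_eq_zero hθ hu hv x (fun p hp => hrows p ?_)
    (extendByZero_one_eq_zero hm h₀ h₁)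
  rintro rfl
  simp [st10] at hp

/-- If `u + v > 0`, there is exactly one vector `x ∈ ℝ^{S_m}` with `Q x = 0` and the
normalization `x_{(1,0)} + x_{(1,1)} = 1`. -/
theorem stmt6 (m : ℕ) (hm : 1 ≤ m) (θ u v : ℝ) (hθ : 0 < θ) (hu : 0 ≤ u) (hv : 0 ≤ v)
    (huv : 0 < u + v) :
    ∃! x : SmIdx m → ℝ,
      (coalQ m θ u v).mulVec x = 0 ∧ x (st10 m hm) + x (st11 m hm) = 1 := by
  have hinj := normalizedQ_mulVec_injective hm hθ hu hv huv
  have hbij : Function.Bijective (normalizedQ m hm θ u v).mulVec :=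
    ⟨hinj, mulVec_surjective_iff_isUnit.mpr (mulVec_injective_iff_isUnit.mp hinj)⟩
  exact (existsUnique_congr (normalizedQ_mulVec_eq_single_iff hm θ u v)).mp
    (hbij.existsUnique _)
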